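/- Let n ≥ 6 and let T be any 3-element subset of [n]. Then the set S of all 2-subsets of [n] that intersect T in exactly one element is a super vertex-cut of the Johnson graph J(n,2) of cardinality 3(n−3); that is, |S| = 3(n−3), deleting S disconnects J(n,2), and J(n,2)−S has no isolated vertex. -/

import Mathlib

open SimpleGraph Finset

/-- Vertex type of the Johnson graph `J(n,k)`: the `k`-element subsets of `[n]`. -/
abbrev JV (n k : ℕ) := {s : Finset (Fin n) // s.card = k}

/-- The Johnson graph `J(n,k)`: two `k`-subsets are adjacent iff their
intersection has exactly `k-1` elements. -/
def johnsonGraph (n k : ℕ) : SimpleGraph (JV n k) where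
  Adj u v := u ≠ v ∧ (u.val ∩ v.val).card = k - 1
  symm := by
    constructor
    intro u v h
    exact ⟨h.1.symm, by rw [Finset.inter_comm]; exact h.2⟩
  loopless := by
    constructor
    intro u h
    exact h.1 rfl

/-- `S` is a vertex-cut of `G` if deleting `S` disconnects `G`. -/
def IsVertexCut {V : Type*} (G : SimpleGraph V) (S : Set V) : Prop :=
  ¬ (G.induce Sᶜ).Preconnected

/-- `S` is a super vertex-cut of `G` if deleting `S` disconnects `G` and
leaves no isolated vertex. -/
def IsSuperVertexCut {V : Type*} (G : SimpleGraph V) (S : Set V) : Prop :=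
  IsVertexCut G S ∧ ∀ v : ↥Sᶜ, ∃ w : ↥Sᶜ, (G.induce Sᶜ).Adj v w

/-- The super-connectivity of `G`: the least cardinality of a super vertex-cut,
or `⊤` if none exists. -/
noncomputable def superConnectivity {V : Type*} [Fintype V] (G : SimpleGraph V) : ℕ∞ :=
  sInf {m : ℕ∞ | ∃ S : Finset V, IsSuperVertexCut G ↑S ∧ (S.card : ℕ∞) = m}

/-- `S` is a minimum super vertex-cut of `G`. -/
def IsMinSuperVertexCut {V : Type*} [Fintype V] (G : SimpleGraph V) (S : Finset V) : Prop :=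
  IsSuperVertexCut G ↑S ∧ ∀ T : Finset V, IsSuperVertexCut G ↑T → S.card ≤ T.card

/-!
Outside `S` lie exactly the 2-subsets of `T` and the 2-subsets of `Tᶜ`. Two vertices on opposite
sides are disjoint, hence not adjacent, so deleting `S` separates the two sides; and since each
side has at least three points, a vertex `{a, b}` on one side has the neighbour `{a, c}` on the same
side. The count comes from the bijection `(a, b) ↦ {a, b}` from `T ×ˢ Tᶜ` onto `S`.
-/

section PairsMeetingOnce

variable {α : Type*} [DecidableEq α] {T : Finset α}

lemma pair_inter_of_mem_of_notMem {a b : α} (ha : a ∈ T) (hb : b ∉ T) :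
    ({a, b} : Finset α) ∩ T = {a} := by
  rw [insert_inter_of_mem ha, singleton_inter_of_notMem hb, insert_empty]

lemma pair_sdiff_of_mem_of_notMem {a b : α} (ha : a ∈ T) (hb : b ∉ T) :
    ({a, b} : Finset α) \ T = {b} := by
  rw [insert_sdiff_of_mem _ ha, sdiff_eq_self_of_disjoint (disjoint_singleton_left.mpr hb)]

lemma card_inter_eq_one_iff_exists_pair {s : Finset α} (hs : #s = 2) :
    #(s ∩ T) = 1 ↔ ∃ a ∈ T, ∃ b ∉ T, s = {a, b} := by
  constructor
  · intro h
    obtain ⟨a, ha⟩ := card_eq_one.mp h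
    obtain ⟨b, hb⟩ : ∃ b, s \ T = {b} :=
      card_eq_one.mp (by have := card_sdiff_add_card_inter s T; omega)
    refine ⟨a, (mem_inter.mp (ha ▸ mem_singleton_self a)).2,
      b, (mem_sdiff.mp (hb ▸ mem_singleton_self b)).2, ?_⟩
    rw [← sdiff_union_inter s T, ha, hb, union_singleton]
  · rintro ⟨a, ha, b, hb, rfl⟩
    rw [pair_inter_of_mem_of_notMem ha hb, card_singleton]

lemma card_inter_ne_one_iff {s : Finset α} [Fintype α] (hs : #s = 2) :
    #(s ∩ T) ≠ 1 ↔ s ⊆ T ∨ s ⊆ Tᶜ := by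
  have hle : #(s ∩ T) ≤ 2 := hs ▸ card_le_card inter_subset_left
  have hT : s ⊆ T ↔ #(s ∩ T) = 2 :=
    ⟨fun h => by rw [inter_eq_left.mpr h, hs],
      fun h => inter_eq_left.mp (eq_of_subset_of_card_le inter_subset_left (by omega))⟩
  rw [hT, subset_compl_iff_disjoint_right, disjoint_iff_inter_eq_empty, ← card_eq_zero]
  omega

end PairsMeetingOnce

lemma card_johnson_two_filter_card_inter_eq_one {n : ℕ} (T : Finset (Fin n)) :
    #{v : JV n 2 | #(v.val ∩ T) = 1} = #T * #Tᶜ := by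
  calc #{v : JV n 2 | #(v.val ∩ T) = 1} = #(T ×ˢ Tᶜ) := by
        refine (card_bij (fun p hp => ⟨{p.1, p.2}, card_pair (ne_of_mem_of_not_mem
          (mem_product.mp hp).1 (mem_compl.mp (mem_product.mp hp).2))⟩) ?_ ?_ ?_).symm
        · rintro ⟨a, b⟩ hp
          simp only [mem_product, mem_compl] at hp
          rw [mem_filter, pair_inter_of_mem_of_notMem hp.1 hp.2, card_singleton]
          exact ⟨mem_univ _, rfl⟩
        · rintro ⟨a, b⟩ hp ⟨a', b'⟩ hp' h
          simp only [mem_product, mem_compl] at hp hp'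
          have hs : ({a, b} : Finset (Fin n)) = {a', b'} := congrArg Subtype.val h
          have ha := congrArg (· ∩ T) hs
          have hb := congrArg (· \ T) hs
          simp only [pair_inter_of_mem_of_notMem, pair_sdiff_of_mem_of_notMem, hp, hp',
            not_false_eq_true, singleton_inj] at ha hb
          rw [ha, hb]
        · intro v hv
          obtain ⟨a, ha, b, hb, hv⟩ :=
            (card_inter_eq_one_iff_exists_pair v.2).mp (mem_filter.mp hv).2
          exact ⟨(a, b), mem_product.mpr ⟨ha, mem_compl.mpr hb⟩, Subtype.ext hv.symm⟩
    _ = #T * #Tᶜ := card_product T Tᶜ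

lemma isVertexCut_of_adj_closed {V : Type*} {G : SimpleGraph V} {S : Set V} (P : V → Prop)
    (hP : ∀ x y, y ∉ S → G.Adj x y → P x → P y) {x y : V} (hx : x ∉ S) (hy : y ∉ S)
    (hPx : P x) (hPy : ¬ P y) : IsVertexCut G S := by
  intro hconn
  obtain ⟨p⟩ := hconn ⟨x, hx⟩ ⟨y, hy⟩
  suffices ∀ {u v : ↥Sᶜ} (q : (G.induce Sᶜ).Walk u v), P u → P v from hPy (this p hPx)
  intro u v q
  induction q with
  | nil => exact id
  | @cons _ w _ h _ ih => exact fun hu => ih (hP _ _ w.2 h hu)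

section Johnson

variable {n k : ℕ}

lemma johnsonGraph_not_adj_of_subset_of_subset_compl (hk : 2 ≤ k) {T : Finset (Fin n)}
    {u w : JV n k} (hu : u.val ⊆ T) (hw : w.val ⊆ Tᶜ) : ¬ (johnsonGraph n k).Adj u w := by
  rintro ⟨-, h⟩
  have hdisj : Disjoint u.val w.val :=
    (subset_compl_iff_disjoint_right.mp hw).symm.mono_left hu
  rw [disjoint_iff_inter_eq_empty.mp hdisj, card_empty] at h
  omega

lemma johnsonGraph_exists_adj_subset {R : Finset (Fin n)} (hk : 0 < k) (hR : k < #R)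
    (u : JV n k) (hu : u.val ⊆ R) : ∃ w : JV n k, (johnsonGraph n k).Adj u w ∧ w.val ⊆ R := by
  obtain ⟨a, ha⟩ : u.val.Nonempty := card_pos.mp (by rw [u.2]; exact hk)
  obtain ⟨c, hc⟩ : (R \ u.val).Nonempty :=
    card_pos.mp (by rw [card_sdiff_of_subset hu, u.2]; omega)
  rw [mem_sdiff] at hc
  have hcw : c ∉ u.val.erase a := fun h => hc.2 (mem_of_mem_erase h)
  refine ⟨⟨insert c (u.val.erase a), ?_⟩, ⟨fun h => hc.2 ?_, ?_⟩, ?_⟩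
  · rw [card_insert_of_notMem hcw, card_erase_of_mem ha, u.2]; omega
  · rw [h]; exact mem_insert_self c _
  · rw [inter_insert_of_notMem hc.2, inter_eq_right.mpr (erase_subset a _),
      card_erase_of_mem ha, u.2]
  · exact insert_subset hc.1 ((erase_subset a _).trans hu)

end Johnson

lemma isSuperVertexCut_johnsonGraph_two {n : ℕ} {T : Finset (Fin n)} (hT : 3 ≤ #T)
    (hTc : 3 ≤ #Tᶜ) :
    IsSuperVertexCut (johnsonGraph n 2) ↑(univ.filter fun v : JV n 2 => #(v.val ∩ T) = 1) := by
  have hS (v : JV n 2) :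
      v ∉ (↑(univ.filter fun v : JV n 2 => #(v.val ∩ T) = 1) : Set (JV n 2)) ↔
        v.val ⊆ T ∨ v.val ⊆ Tᶜ := by
    simpa using card_inter_ne_one_iff v.2
  obtain ⟨s, hsT, hs⟩ := exists_subset_card_eq (show 2 ≤ #T by omega)
  obtain ⟨t, htT, ht⟩ := exists_subset_card_eq (show 2 ≤ #Tᶜ by omega)
  refine ⟨isVertexCut_of_adj_closed (fun v => v.val ⊆ T) ?_ ((hS ⟨s, hs⟩).2 (.inl hsT))
    ((hS ⟨t, ht⟩).2 (.inr htT)) hsT ?_, ?_⟩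
  · intro x y hy hxy hx
    exact ((hS y).1 hy).resolve_right
      fun h => johnsonGraph_not_adj_of_subset_of_subset_compl le_rfl hx h hxy
  · intro htT'
    obtain ⟨a, ha⟩ : t.Nonempty := card_pos.mp (by omega)
    exact mem_compl.mp (htT ha) (htT' ha)
  · rintro ⟨v, hv⟩
    obtain ⟨w, hvw, hw⟩ :
        ∃ w : JV n 2, (johnsonGraph n 2).Adj v w ∧ (w.val ⊆ T ∨ w.val ⊆ Tᶜ) := by
      rcases (hS v).1 hv with h | h
      · obtain ⟨w, hvw, hw⟩ := johnsonGraph_exists_adj_subset two_pos hT v h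
        exact ⟨w, hvw, .inl hw⟩
      · obtain ⟨w, hvw, hw⟩ := johnsonGraph_exists_adj_subset two_pos hTc v h
        exact ⟨w, hvw, .inr hw⟩
    exact ⟨⟨w, (hS w).2 hw⟩, hvw⟩

/-- For `n ≥ 6` and any 3-subset `T` of `[n]`, the set of 2-subsets meeting `T`
in exactly one element is a super vertex-cut of `J(n,2)` of size `3(n-3)`. -/
theorem johnson_two_explicit_superVertexCut (n : ℕ) (hn : 6 ≤ n)
    (T : Finset (Fin n)) (hT : T.card = 3) :
    (Finset.univ.filter (fun v : JV n 2 => (v.val ∩ T).card = 1)).card = 3 * (n - 3) ∧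
    IsSuperVertexCut (johnsonGraph n 2)
      ↑(Finset.univ.filter (fun v : JV n 2 => (v.val ∩ T).card = 1)) := by
  have hTc : #Tᶜ = n - 3 := by rw [card_compl, Fintype.card_fin, hT]
  exact ⟨by rw [card_johnson_two_filter_card_inter_eq_one, hT, hTc],
    isSuperVertexCut_johnsonGraph_two hT.ge (by omega)⟩
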